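/- In the space Bir₂ of quadratic birational maps of P²(C) one has the incidence relations (closures taken inside Bir₂): the closure of Σ¹ equals Σ⁰ ∪ Σ¹, the closure of Σ² equals Σ⁰ ∪ Σ¹ ∪ Σ², and the closure of Σ³ equals Σ⁰ ∪ Σ¹ ∪ Σ² ∪ Σ³ = Bir₂; in particular Σ³ is dense in Bir₂. -/

import Mathlib

open MvPolynomial

/-- Homogeneous-coordinate polynomials: polynomials in three variables over `ℂ`. -/
abbrev P3 : Type := MvPolynomial (Fin 3) ℂ

/-- Vectors in `ℂ³` (homogeneous coordinates on `ℙ²(ℂ)`). -/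
abbrev V3 : Type := Fin 3 → ℂ

/-- Evaluation of a polynomial triple at a point of `ℂ³`. -/
noncomputable def evalT (F : Fin 3 → P3) (x : V3) : V3 := fun i => eval x (F i)

/-- Two vectors of `ℂ³` represent the same point of `ℙ²(ℂ)`. -/
def ProjRel (u v : V3) : Prop := ∃ c : ℂ, c ≠ 0 ∧ v = c • u

/-- The three components have no nonconstant common factor. -/
def NoCommonFactor (F : Fin 3 → P3) : Prop := ∀ p : P3, (∀ i, p ∣ F i) → IsUnit p

/-- The Jacobian determinant `det (∂Fᵢ/∂xⱼ)` of a polynomial triple. -/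
noncomputable def detJac (F : Fin 3 → P3) : P3 :=
  Matrix.det (Matrix.of fun i j => pderiv j (F i))

/-- `G` is a rational inverse of `F`: both composites are (a nonzero multiple of) the
identity as rational maps of `ℙ²(ℂ)`. -/
def InverseOf (G F : Fin 3 → P3) : Prop :=
  (∃ h : P3, h ≠ 0 ∧ ∀ i, bind₁ F (G i) = h * X i) ∧
  (∃ h : P3, h ≠ 0 ∧ ∀ i, bind₁ G (F i) = h * X i)

/-- The rational map of `ℙ²(ℂ)` induced by `F` is birational: it admits a rational
inverse (given by a triple of homogeneous polynomials of some common degree). -/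
def IsBirational (F : Fin 3 → P3) : Prop :=
  ∃ (m : ℕ) (G : Fin 3 → P3), (∀ i, (G i).IsHomogeneous m) ∧ InverseOf G F

/-- `F` contracts the curve `{P = 0}`: the image under `F` of the curve, away from the
indeterminacy points of `F`, is a single point of `ℙ²(ℂ)`. -/
def Contracts (F : Fin 3 → P3) (P : P3) : Prop :=
  ∃ p : V3, p ≠ 0 ∧ ∀ x : V3, x ≠ 0 → eval x P = 0 → evalT F x ≠ 0 →
    ProjRel p (evalT F x)

/-- The triple of linear forms associated with a matrix `B`, i.e. the substitution
`x ↦ Bx`. -/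
noncomputable def linSub (B : Matrix (Fin 3) (Fin 3) ℂ) : Fin 3 → P3 :=
  fun j => ∑ k, C (B j k) * X k

/-- The left-right action: `(A, B) · F = A ∘ F ∘ B`. -/
noncomputable def gd (A B : Matrix (Fin 3) (Fin 3) ℂ) (F : Fin 3 → P3) : Fin 3 → P3 :=
  fun i => ∑ j, C (A i j) * bind₁ (linSub B) (F j)

/-- Left-right (g.d.) equivalence of rational maps: `G = A F B` for some
`A, B ∈ PGL₃(ℂ)` (up to the projective scalar `c`). -/
def GDEquiv (F G : Fin 3 → P3) : Prop :=
  ∃ (A B : Matrix (Fin 3) (Fin 3) ℂ) (c : ℂ), IsUnit A.det ∧ IsUnit B.det ∧ c ≠ 0 ∧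
    ∀ i, G i = C c * gd A B F i

/-- The Cremona involution `σ`. -/
noncomputable def sigmaC : Fin 3 → P3 := ![X 1 * X 2, X 0 * X 2, X 0 * X 1]

/-- The involution `ρ = (x₀x₁ : x₂² : x₁x₂)`. -/
noncomputable def rhoC : Fin 3 → P3 := ![X 0 * X 1, X 2 ^ 2, X 1 * X 2]

/-- The involution `τ = (x₀² : x₀x₁ : x₁² − x₀x₂)`. -/
noncomputable def tauC : Fin 3 → P3 := ![X 0 ^ 2, X 0 * X 1, X 1 ^ 2 - X 0 * X 2]

/-- The element `x₀·(x₀ : x₁ : x₂)` of `Σ⁰`. -/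
noncomputable def lin0C : Fin 3 → P3 := ![X 0 ^ 2, X 0 * X 1, X 0 * X 2]

/-- The coefficient space of (triples of) quadratic forms in three variables:
`Rat₂` is its projectivization. -/
abbrev W9 : Type := Fin 3 → Fin 3 → Fin 3 → ℂ

/-- The quadratic triple with coefficients `w`. -/
noncomputable def toPoly (w : W9) : Fin 3 → P3 :=
  fun i => ∑ j, ∑ k, C (w i j k) * (X j * X k)

/-- Membership in the (cone over the) left-right orbit of the model `F₀`. -/
def InGDOrbit (F₀ : Fin 3 → P3) (w : W9) : Prop :=
  ∃ (A B : Matrix (Fin 3) (Fin 3) ℂ) (c : ℂ), IsUnit A.det ∧ IsUnit B.det ∧ c ≠ 0 ∧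
    ∀ i, toPoly w i = C c * gd A B F₀ i

/-- `Σ³`, the left-right orbit of `σ`. -/
def Sigma3 : Set W9 := {w | InGDOrbit sigmaC w}

/-- `Σ²`, the left-right orbit of `ρ`. -/
def Sigma2 : Set W9 := {w | InGDOrbit rhoC w}

/-- `Σ¹`, the left-right orbit of `τ`. -/
def Sigma1 : Set W9 := {w | InGDOrbit tauC w}

/-- `Σ⁰`, the left-right orbit of `x₀·(x₀:x₁:x₂)`, i.e. the quadratic triples of the
form `ℓ(ℓ₀:ℓ₁:ℓ₂)` with `ℓ₀, ℓ₁, ℓ₂` independent linear forms. -/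
def Sigma0 : Set W9 := {w | InGDOrbit lin0C w}

/-- `Bir₂ = Σ⁰ ∪ Σ¹ ∪ Σ² ∪ Σ³`, the quadratic birational maps. -/
def Bir2 : Set W9 := Sigma0 ∪ Sigma1 ∪ Sigma2 ∪ Sigma3

/-!
The strata are told apart by the Jacobian determinant `J` of a quadratic map, a cubic form:
by the chain rule for the left-right action, up to a scalar and a linear change of coordinates
`J` is `x₀x₁x₂` on `Σ³`, `x₁x₂²` on `Σ²` and `x₀³` on `Σ¹`. Two closed conditions on the
coefficients separate them: `J` is the cube of a linear form (true on `Σ¹`, false on `Σ²` and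
`Σ³`), and the Hessian of `J` vanishes identically (true on `Σ²`, false on `Σ³`).
Conversely, explicit one-parameter families in `Σ³`, `Σ²`, `Σ¹` degenerate at `t = 0` to `ρ`,
`τ` and `x₀(x₀ : x₁ : x₂)`; as the left-right action is continuous on coefficients, the whole
orbit `Σᵏ⁻¹` then lies in the closure of `Σᵏ`.
-/

namespace Cremona

open Matrix

theorem closure_inter_union_eq {X : Type*} [TopologicalSpace X] {T L R Z : Set X}
    (hL : L ⊆ closure T) (hZ : closure T ⊆ Z) (hR : Disjoint R Z) :
    closure T ∩ (L ∪ R) = L := by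
  refine Set.Subset.antisymm (fun w ⟨hw, hLR⟩ => hLR.resolve_right fun hwR => ?_)
    fun w hw => ⟨hL hw, Or.inl hw⟩
  exact hR.notMem_of_mem_left hwR (hZ hw)

theorem pderiv_bind₁ {σ τ R : Type*} [Fintype σ] [CommSemiring R]
    (f : σ → MvPolynomial τ R) (p : MvPolynomial σ R) (j : τ) :
    pderiv j (bind₁ f p) = ∑ i, bind₁ f (pderiv i p) * pderiv j (f i) := by
  classical
  induction p using MvPolynomial.induction_on with
  | C a => simp
  | add p q hp hq => simp [hp, hq, add_mul, Finset.sum_add_distrib]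
  | mul_X p i hp =>
    simp [hp, pderiv_X, Pi.single_apply, add_mul, Finset.sum_add_distrib,
      Finset.mul_sum, apply_ite (bind₁ f), mul_assoc]

theorem pderiv_linSub (B : Matrix (Fin 3) (Fin 3) ℂ) (k j : Fin 3) :
    pderiv j (linSub B k) = C (B k j) := by
  simp [linSub, pderiv_X, Pi.single_apply]

theorem eval_bind₁_linSub (B : Matrix (Fin 3) (Fin 3) ℂ) (x : V3) (p : P3) :
    eval x (bind₁ (linSub B) p) = eval (B *ᵥ x) p := by
  rw [← aeval_eq_eval, aeval_bind₁, aeval_eq_eval]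
  congr 2
  funext k
  simp [linSub, mulVec, dotProduct]

theorem detJac_smul_gd (A B : Matrix (Fin 3) (Fin 3) ℂ) (c : ℂ) (F : Fin 3 → P3) :
    detJac (fun i => C c * gd A B F i) =
      C (c ^ 3 * A.det * B.det) * bind₁ (linSub B) (detJac F) := by
  have hJ : (Matrix.of fun i j => pderiv j (C c * gd A B F i)) =
      (C c : P3) • (A.map C * (Matrix.of fun i j => pderiv j (F i)).map (bind₁ (linSub B)) *
        B.map C) := by
    ext i j
    simp only [gd, pderiv_C_mul, map_sum, pderiv_bind₁, pderiv_linSub, Matrix.of_apply,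
      Matrix.smul_apply, Matrix.mul_apply, Matrix.map_apply, smul_eq_mul, Finset.mul_sum,
      Finset.sum_mul]
    rw [Finset.sum_comm]
    simp only [mul_assoc]
  rw [detJac, hJ, Matrix.det_smul, Matrix.det_mul, Matrix.det_mul,
    show (A.map C).det = C A.det from (RingHom.map_det _ _).symm,
    show (B.map C).det = C B.det from (RingHom.map_det _ _).symm,
    show ((Matrix.of fun i j => pderiv j (F i)).map (bind₁ (linSub B))).det =
      bind₁ (linSub B) (detJac F) from (AlgHom.map_det _ _).symm,
    Fintype.card_fin, map_mul, map_mul, map_pow]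
  ring

theorem detJac_sigmaC : detJac sigmaC = C 2 * (X 0 * X 1 * X 2) := by
  simp [detJac, sigmaC, det_fin_three, pderiv_X, map_ofNat C 2]
  ring

theorem detJac_rhoC : detJac rhoC = C (-2) * (X 1 * X 2 * X 2) := by
  simp [detJac, rhoC, det_fin_three, pderiv_X, map_ofNat C 2]
  ring

theorem detJac_tauC : detJac tauC = C (-2) * (X 0 * X 0 * X 0) := by
  simp [detJac, tauC, det_fin_three, pderiv_X, map_ofNat C 2]
  ring

noncomputable def jacDet (w : W9) (x : V3) : ℂ := eval x (detJac (toPoly w))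

noncomputable def rowForm (B : Matrix (Fin 3) (Fin 3) ℂ) (i : Fin 3) : V3 →+ ℂ :=
  (LinearMap.proj i ∘ₗ B.mulVecLin).toAddMonoidHom

@[simp]
theorem rowForm_apply (B : Matrix (Fin 3) (Fin 3) ℂ) (i : Fin 3) (x : V3) :
    rowForm B i x = (B *ᵥ x) i := rfl

theorem jacDet_eq_of_inGDOrbit {F₀ : Fin 3 → P3} {k : ℂ} {i j l : Fin 3}
    (hF₀ : detJac F₀ = C k * (X i * X j * X l)) (hk : k ≠ 0) {w : W9} (hw : InGDOrbit F₀ w) :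
    ∃ K ≠ 0, ∃ B : Matrix (Fin 3) (Fin 3) ℂ, IsUnit B.det ∧
      jacDet w = fun x => K * (rowForm B i x * rowForm B j x * rowForm B l x) := by
  obtain ⟨A, B, c, hA, hB, hc, hwF⟩ := hw
  have hK : c ^ 3 * A.det * B.det * k ≠ 0 := by
    have := hA.ne_zero; have := hB.ne_zero; positivity
  refine ⟨_, hK, B, hB, funext fun x => ?_⟩
  simp only [jacDet, show toPoly w = fun i => C c * gd A B F₀ i from funext hwF, detJac_smul_gd,
    hF₀, eval_mul, eval_C, eval_bind₁_linSub, eval_X, rowForm_apply]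
  ring

theorem eval_pderiv_toPoly (w : W9) (x : V3) (i j : Fin 3) :
    eval x (pderiv j (toPoly w i)) = ∑ k, (w i j k + w i k j) * x k := by
  fin_cases j <;> simp [toPoly, Fin.sum_univ_three, pderiv_X] <;> ring

@[fun_prop]
theorem continuous_jacDet (x : V3) : Continuous fun w => jacDet w x := by
  have hjac : (fun w => jacDet w x) =
      fun w => (Matrix.of fun i j => ∑ k, (w i j k + w i k j) * x k).det := by
    funext w
    rw [jacDet, detJac, RingHom.map_det]
    congr 1
    ext i j
    exact eval_pderiv_toPoly w x i j
  rw [hjac]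
  fun_prop

section Polarization

variable {M K : Type*} [AddCommGroup M] [Field K]

def polar3 (f : M → K) (x y z : M) : K :=
  (f (x + y + z) - f (x + y) - f (x + z) - f (y + z) + f x + f y + f z) / 6

theorem polar3_mul_mul (k : K) (a b c : M →+ K) (x y z : M) :
    polar3 (fun v => k * (a v * b v * c v)) x y z =
      k * (a x * b y * c z + a x * b z * c y + a y * b x * c z + a y * b z * c x
        + a z * b x * c y + a z * b y * c x) / 6 := by
  simp only [polar3, map_add]
  ring

end Polarization

noncomputable def jacPolar (w : W9) : V3 → V3 → V3 → ℂ := polar3 (jacDet w)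

@[fun_prop]
theorem continuous_jacPolar (x y z : V3) : Continuous fun w => jacPolar w x y z := by
  unfold jacPolar polar3
  fun_prop

-- The symmetric trilinear form `jacPolar w` has rank at most one, i.e. the Jacobian cubic is the
-- cube of a linear form.
def cubeLocus : Set W9 :=
  {w | ∀ x y z x' y' z', jacPolar w x y z * jacPolar w x' y' z' =
    jacPolar w x' y z * jacPolar w x y' z'}

-- Since `jacPolar w x eₐ e_b = (∂ₐ∂_b J)(x) / 6` for the Jacobian cubic `J`, this is a sixth
-- of the Hessian matrix of `J` at `x`.
noncomputable def jacHessian (w : W9) (x : V3) : Matrix (Fin 3) (Fin 3) ℂ :=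
  Matrix.of fun a b => jacPolar w x (Pi.single a 1) (Pi.single b 1)

def flatHessianLocus : Set W9 := {w | ∀ x, (jacHessian w x).det = 0}

theorem isClosed_cubeLocus : IsClosed cubeLocus := by
  simp only [cubeLocus, Set.ofPred_forall]
  exact isClosed_iInter fun _ => isClosed_iInter fun _ => isClosed_iInter fun _ =>
    isClosed_iInter fun _ => isClosed_iInter fun _ => isClosed_iInter fun _ =>
      isClosed_eq (by fun_prop) (by fun_prop)

theorem isClosed_flatHessianLocus : IsClosed flatHessianLocus := by
  simp only [flatHessianLocus, jacHessian, Set.ofPred_forall]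
  exact isClosed_iInter fun _ => isClosed_eq (by fun_prop) continuous_const

theorem exists_mulVec_eq {n R : Type*} [Fintype n] [DecidableEq n] [CommRing R]
    {B : Matrix n n R} (hB : IsUnit B.det) (y : n → R) : ∃ x, B *ᵥ x = y :=
  mulVec_surjective_iff_isUnit.2 ((isUnit_iff_isUnit_det B).2 hB) y

theorem sigma1_subset_cubeLocus : Sigma1 ⊆ cubeLocus := by
  intro w hw x y z x' y' z'
  obtain ⟨K, -, B, -, hJ⟩ := jacDet_eq_of_inGDOrbit detJac_tauC (by norm_num) hw
  simp only [jacPolar, hJ, polar3_mul_mul]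
  ring

theorem disjoint_sigma2_cubeLocus : Disjoint Sigma2 cubeLocus := by
  refine Set.disjoint_left.2 fun w hw hZ => ?_
  obtain ⟨K, hK, B, hB, hJ⟩ := jacDet_eq_of_inGDOrbit detJac_rhoC (by norm_num) hw
  obtain ⟨u, hu⟩ := exists_mulVec_eq hB (Pi.single 1 1)
  obtain ⟨v, hv⟩ := exists_mulVec_eq hB (Pi.single 2 1)
  have := hZ u v v v u v
  simp only [jacPolar, hJ, polar3_mul_mul] at this
  simp [hu, hv] at this
  exact hK this

theorem disjoint_sigma3_cubeLocus : Disjoint Sigma3 cubeLocus := by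
  refine Set.disjoint_left.2 fun w hw hZ => ?_
  obtain ⟨K, hK, B, hB, hJ⟩ := jacDet_eq_of_inGDOrbit detJac_sigmaC (by norm_num) hw
  obtain ⟨u₀, hu₀⟩ := exists_mulVec_eq hB (Pi.single 0 1)
  obtain ⟨u₁, hu₁⟩ := exists_mulVec_eq hB (Pi.single 1 1)
  obtain ⟨u₂, hu₂⟩ := exists_mulVec_eq hB (Pi.single 2 1)
  have := hZ u₀ u₁ u₂ u₁ u₀ u₂
  simp only [jacPolar, hJ, polar3_mul_mul] at this
  simp [hu₀, hu₁, hu₂] at this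
  exact hK this

theorem jacHessian_eq_of_jacDet_eq_rho {w : W9} {K : ℂ} {B : Matrix (Fin 3) (Fin 3) ℂ}
    (hJ : jacDet w = fun x => K * (rowForm B 1 x * rowForm B 2 x * rowForm B 2 x)) (x : V3) :
    jacHessian w x = (K / 3) • (Bᵀ * !![0, 0, 0; 0, 0, (B *ᵥ x) 2; 0, (B *ᵥ x) 2, (B *ᵥ x) 1] * B) := by
  ext a b
  simp only [jacHessian, of_apply, jacPolar, hJ, polar3_mul_mul]
  simp [mul_apply, Fin.sum_univ_three]
  ring

theorem jacHessian_eq_of_jacDet_eq_sigma {w : W9} {K : ℂ} {B : Matrix (Fin 3) (Fin 3) ℂ}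
    (hJ : jacDet w = fun x => K * (rowForm B 0 x * rowForm B 1 x * rowForm B 2 x)) (x : V3) :
    jacHessian w x = (K / 6) • (Bᵀ * !![0, (B *ᵥ x) 2, (B *ᵥ x) 1; (B *ᵥ x) 2, 0, (B *ᵥ x) 0;
      (B *ᵥ x) 1, (B *ᵥ x) 0, 0] * B) := by
  ext a b
  simp only [jacHessian, of_apply, jacPolar, hJ, polar3_mul_mul]
  simp [mul_apply, Fin.sum_univ_three]
  ring

theorem sigma2_subset_flatHessianLocus : Sigma2 ⊆ flatHessianLocus := by
  intro w hw x
  obtain ⟨K, -, B, -, hJ⟩ := jacDet_eq_of_inGDOrbit detJac_rhoC (by norm_num) hw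
  rw [jacHessian_eq_of_jacDet_eq_rho hJ, det_smul, det_mul, det_mul]
  simp [det_fin_three]

theorem disjoint_sigma3_flatHessianLocus : Disjoint Sigma3 flatHessianLocus := by
  refine Set.disjoint_left.2 fun w hw hZ => ?_
  obtain ⟨K, hK, B, hB, hJ⟩ := jacDet_eq_of_inGDOrbit detJac_sigmaC (by norm_num) hw
  obtain ⟨x, hx⟩ := exists_mulVec_eq hB 1
  have := hZ x
  obtain ⟨d, hd⟩ : ∃ d, B.det = d := ⟨_, rfl⟩
  rw [jacHessian_eq_of_jacDet_eq_sigma hJ, hx, det_smul, det_mul, det_mul, det_transpose, hd] at this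
  simp [det_fin_three, hK, hd ▸ hB.ne_zero] at this

theorem eval_toPoly (w : W9) (x : V3) (i : Fin 3) :
    eval x (toPoly w i) = ∑ j, ∑ k, w i j k * (x j * x k) := by
  simp [toPoly]

theorem evalT_smul_gd (A B : Matrix (Fin 3) (Fin 3) ℂ) (c : ℂ) (F : Fin 3 → P3) (x : V3) :
    evalT (fun i => C c * gd A B F i) x = c • (A *ᵥ evalT F (B *ᵥ x)) := by
  funext i
  simp [evalT, gd, eval_bind₁_linSub, mulVec, dotProduct]

theorem eq_of_evalT_eq {F G : Fin 3 → P3} (h : ∀ x, evalT F x = evalT G x) : F = G :=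
  funext fun i => MvPolynomial.funext fun x => by simpa only [evalT] using congrFun (h x) i

theorem inGDOrbit_iff_evalT {F₀ : Fin 3 → P3} {w : W9} :
    InGDOrbit F₀ w ↔ ∃ (A B : Matrix (Fin 3) (Fin 3) ℂ) (c : ℂ),
      IsUnit A.det ∧ IsUnit B.det ∧ c ≠ 0 ∧
        ∀ x, evalT (toPoly w) x = c • (A *ᵥ evalT F₀ (B *ᵥ x)) := by
  refine exists₃_congr fun A B c => and_congr_right' <| and_congr_right' <|
    and_congr_right' ⟨fun h x => ?_, fun h => ?_⟩
  · rw [← evalT_smul_gd, show toPoly w = _ from funext h]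
  · exact congrFun (eq_of_evalT_eq fun x => (h x).trans (evalT_smul_gd A B c F₀ x).symm)

theorem toPoly_add (u v : W9) : toPoly (u + v) = toPoly u + toPoly v := by
  funext i
  simp [toPoly, add_mul, Finset.sum_add_distrib]

theorem toPoly_sub (u v : W9) : toPoly (u - v) = toPoly u - toPoly v := by
  funext i
  simp [toPoly, sub_mul, Finset.sum_sub_distrib]

theorem inGDOrbit_of_toPoly_eq {F₀ : Fin 3 → P3} {u v : W9} (h : toPoly u = toPoly v)
    (hv : InGDOrbit F₀ v) : InGDOrbit F₀ u := by
  rwa [InGDOrbit, h]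

noncomputable def act (A B : Matrix (Fin 3) (Fin 3) ℂ) (c : ℂ) (v : W9) : W9 :=
  fun i p q => c * ∑ j, A i j * ∑ j', ∑ k, v j j' k * (B j' p * B k q)

theorem continuous_act (A B : Matrix (Fin 3) (Fin 3) ℂ) (c : ℂ) : Continuous (act A B c) := by
  unfold act
  fun_prop

theorem evalT_toPoly_act (A B : Matrix (Fin 3) (Fin 3) ℂ) (c : ℂ) (v : W9) (x : V3) :
    evalT (toPoly (act A B c v)) x = c • (A *ᵥ evalT (toPoly v) (B *ᵥ x)) := by
  funext i
  simp only [evalT, eval_toPoly, act, mulVec, dotProduct, Fin.sum_univ_three, Pi.smul_apply,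
    smul_eq_mul]
  ring

theorem inGDOrbit_act {F₀ : Fin 3 → P3} {A B : Matrix (Fin 3) (Fin 3) ℂ} {c : ℂ}
    (hA : IsUnit A.det) (hB : IsUnit B.det) (hc : c ≠ 0) {v : W9} (hv : InGDOrbit F₀ v) :
    InGDOrbit F₀ (act A B c v) := by
  obtain ⟨A', B', c', hA', hB', hc', hv⟩ := inGDOrbit_iff_evalT.1 hv
  refine inGDOrbit_iff_evalT.2 ⟨A * A', B' * B, c * c', ?_, ?_, mul_ne_zero hc hc', fun x => ?_⟩
  · simpa only [det_mul] using hA.mul hA'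
  · simpa only [det_mul] using hB'.mul hB
  · rw [evalT_toPoly_act, hv, mulVec_smul, smul_smul, mulVec_mulVec, mulVec_mulVec]

theorem orbit_subset_closure {F F₀ : Fin 3 → P3} {w₀ : W9} (h₀ : toPoly w₀ = F₀)
    (hcl : w₀ ∈ closure {v | InGDOrbit F v}) :
    {w | InGDOrbit F₀ w} ⊆ closure {v | InGDOrbit F v} := by
  intro w hw
  obtain ⟨A, B, c, hA, hB, hc, hw⟩ := inGDOrbit_iff_evalT.1 hw
  have hw₀ : toPoly w = toPoly (act A B c w₀) :=
    eq_of_evalT_eq fun x => by rw [hw, evalT_toPoly_act, h₀]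
  -- `toPoly` forgets the asymmetric part of a coefficient tensor, so `act` is corrected by a shift
  set Φ : W9 → W9 := fun v => act A B c v + (w - act A B c w₀)
  have hΦ : Set.MapsTo Φ {v | InGDOrbit F v} {v | InGDOrbit F v} := fun v hv =>
    inGDOrbit_of_toPoly_eq (by simp only [Φ, toPoly_add, toPoly_sub, hw₀, sub_self, add_zero])
      (inGDOrbit_act hA hB hc hv)
  have : Φ w₀ = w := add_sub_cancel _ _
  exact this ▸ hΦ.closure ((continuous_act A B c).add continuous_const) hcl

theorem mem_closure_of_continuous_family {X : Type*} [TopologicalSpace X] {S : Set X}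
    {d : ℂ → X} (hd : Continuous d)
    (h : ∀ t ≠ 0, d t ∈ S) : d 0 ∈ closure S :=
  mem_closure_of_tendsto (hd.continuousWithinAt (s := {0}ᶜ)).tendsto
    (eventually_nhdsWithin_of_forall h)

/-- `(x₀x₁ : x₂(t x₀ + x₂) : x₁x₂)`: the lines `x₂ = 0` and `t x₀ + x₂ = 0` merge as `t → 0`. -/
noncomputable def sigmaToRho (t : ℂ) : W9 :=
  ![![![0, 1, 0], ![0, 0, 0], ![0, 0, 0]],
    ![![0, 0, t], ![0, 0, 0], ![0, 0, 1]],
    ![![0, 0, 0], ![0, 0, 1], ![0, 0, 0]]]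

/-- `(x₀² : x₀(x₁ + t x₂) : x₁(x₁ + t x₂) − x₀x₂)`. -/
noncomputable def rhoToTau (t : ℂ) : W9 :=
  ![![![1, 0, 0], ![0, 0, 0], ![0, 0, 0]],
    ![![0, 1, t], ![0, 0, 0], ![0, 0, 0]],
    ![![0, 0, -1], ![0, 1, t], ![0, 0, 0]]]

/-- `(x₀² : x₀x₁ : x₀x₂ + t x₁²)`. -/
noncomputable def tauToLin (t : ℂ) : W9 :=
  ![![![1, 0, 0], ![0, 0, 0], ![0, 0, 0]],
    ![![0, 1, 0], ![0, 0, 0], ![0, 0, 0]],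
    ![![0, 0, 1], ![0, t, 0], ![0, 0, 0]]]

theorem toPoly_sigmaToRho_zero : toPoly (sigmaToRho 0) = rhoC := by
  refine eq_of_evalT_eq fun x => funext fun i => ?_
  fin_cases i <;> simp [evalT, eval_toPoly, sigmaToRho, rhoC, Fin.sum_univ_three, sq, mul_comm]

theorem toPoly_rhoToTau_zero : toPoly (rhoToTau 0) = tauC := by
  refine eq_of_evalT_eq fun x => funext fun i => ?_
  fin_cases i <;> simp [evalT, eval_toPoly, rhoToTau, tauC, Fin.sum_univ_three] <;> ring

theorem toPoly_tauToLin_zero : toPoly (tauToLin 0) = lin0C := by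
  refine eq_of_evalT_eq fun x => funext fun i => ?_
  fin_cases i <;> simp [evalT, eval_toPoly, tauToLin, lin0C, Fin.sum_univ_three, sq, mul_comm]

theorem sigmaToRho_mem_sigma3 {t : ℂ} (ht : t ≠ 0) : sigmaToRho t ∈ Sigma3 := by
  refine inGDOrbit_iff_evalT.2 ⟨!![1/t, 0, -(1/t); 0, 1, 0; 0, 0, 1],
    !![0, 0, 1; 0, 1, 0; t, 0, 1], 1, ?_, ?_, one_ne_zero, fun x => funext fun i => ?_⟩
  · simp [det_fin_three, ht]
  · simp [det_fin_three, ht]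
  fin_cases i <;> simp [evalT, eval_toPoly, sigmaToRho, sigmaC, Fin.sum_univ_three,
    dotProduct] <;> grind

theorem rhoToTau_mem_sigma2 {t : ℂ} (ht : t ≠ 0) : rhoToTau t ∈ Sigma2 := by
  refine inGDOrbit_iff_evalT.2 ⟨!![0, 1, 0; 0, -(1/t), 1; 1, 1/t^2, 0],
    !![-(1/t), 1, 0; 1/t, 1, t; 1, 0, 0], 1, ?_, ?_, one_ne_zero, fun x => funext fun i => ?_⟩
  · simp [det_fin_three]
  · simp [det_fin_three, ht]
  fin_cases i <;> simp [evalT, eval_toPoly, rhoToTau, rhoC, Fin.sum_univ_three,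
    dotProduct] <;> grind

theorem tauToLin_mem_sigma1 {t : ℂ} (ht : t ≠ 0) : tauToLin t ∈ Sigma1 := by
  refine inGDOrbit_iff_evalT.2 ⟨!![1, 0, 0; 0, 1, 0; 0, 0, t],
    !![1, 0, 0; 0, 1, 0; 0, 0, -(1/t)], 1, ?_, ?_, one_ne_zero, fun x => funext fun i => ?_⟩
  · simp [det_fin_three, ht]
  · simp [det_fin_three, ht]
  fin_cases i <;> simp [evalT, eval_toPoly, tauToLin, tauC, Fin.sum_univ_three,
    dotProduct] <;> grind

theorem sigma2_subset_closure_sigma3 : Sigma2 ⊆ closure Sigma3 :=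
  orbit_subset_closure toPoly_sigmaToRho_zero <|
    mem_closure_of_continuous_family (by unfold sigmaToRho; fun_prop)
      fun _ => sigmaToRho_mem_sigma3

theorem sigma1_subset_closure_sigma2 : Sigma1 ⊆ closure Sigma2 :=
  orbit_subset_closure toPoly_rhoToTau_zero <|
    mem_closure_of_continuous_family (by unfold rhoToTau; fun_prop)
      fun _ => rhoToTau_mem_sigma2

theorem sigma0_subset_closure_sigma1 : Sigma0 ⊆ closure Sigma1 :=
  orbit_subset_closure toPoly_tauToLin_zero <|
    mem_closure_of_continuous_family (by unfold tauToLin; fun_prop)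
      fun _ => tauToLin_mem_sigma1

end Cremona

/-- Incidence relations in `Bir₂` (closures taken inside `Bir₂`):
`cl(Σ¹) = Σ⁰ ∪ Σ¹`, `cl(Σ²) = Σ⁰ ∪ Σ¹ ∪ Σ²`, `cl(Σ³) = Bir₂`; in particular `Σ³` is
dense in `Bir₂`. -/
theorem incidence_relations :
    closure Sigma1 ∩ Bir2 = Sigma0 ∪ Sigma1 ∧
    closure Sigma2 ∩ Bir2 = Sigma0 ∪ Sigma1 ∪ Sigma2 ∧
    closure Sigma3 ∩ Bir2 = Bir2 ∧
    Bir2 ⊆ closure Sigma3 := by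
  have h01 : Sigma0 ⊆ closure Sigma1 := Cremona.sigma0_subset_closure_sigma1
  have h12 : closure Sigma1 ⊆ closure Sigma2 :=
    closure_minimal Cremona.sigma1_subset_closure_sigma2 isClosed_closure
  have h23 : closure Sigma2 ⊆ closure Sigma3 :=
    closure_minimal Cremona.sigma2_subset_closure_sigma3 isClosed_closure
  have h012 : Sigma0 ∪ Sigma1 ∪ Sigma2 ⊆ closure Sigma2 :=
    Set.union_subset (Set.union_subset (h01.trans h12) (subset_closure.trans h12)) subset_closure
  have hBir : Bir2 ⊆ closure Sigma3 := Set.union_subset (h012.trans h23) subset_closure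
  refine ⟨?_, ?_, Set.inter_eq_right.2 hBir, hBir⟩
  · rw [Bir2, Set.union_assoc]
    exact Cremona.closure_inter_union_eq (Set.union_subset h01 subset_closure)
      (closure_minimal Cremona.sigma1_subset_cubeLocus Cremona.isClosed_cubeLocus)
      (Cremona.disjoint_sigma2_cubeLocus.union_left Cremona.disjoint_sigma3_cubeLocus)
  · exact Cremona.closure_inter_union_eq h012
      (closure_minimal Cremona.sigma2_subset_flatHessianLocus
        Cremona.isClosed_flatHessianLocus)
      Cremona.disjoint_sigma3_flatHessianLocus
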